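/- arXiv:math/0611534 — 2 statements merged into one kernel-verified Lean document; each statement's English description precedes it below -/
import Mathlib

section
/- Let r₁, r₂ ≥ 1 and let m_{1,2} ≤ ⋯ ≤ m_{r₂,2} and m_{1,1} ≤ ⋯ ≤ m_{r₁,1} ≤ −1 be integers with m_{r₂,2} ≥ r₁ − 1. Then the element x_{α₂}(m_{1,2})⋯x_{α₂}(m_{r₂,2})·x_{α₁}(m_{1,1})⋯x_{α₁}(m_{r₁,1}) of U(n̄) is a ℂ-linear combination of elements x_{α₂}(m'_{1,2})⋯x_{α₂}(m'_{r₂,2})·x_{α₁}(m'_{1,1})⋯x_{α₁}(m'_{r₁,1}) with m'_{1,2} ≤ ⋯ ≤ m'_{r₂,2} ≤ r₁ − 2, m'_{1,1} ≤ ⋯ ≤ m'_{r₁,1} ≤ −1 and with the same total index sum, plus an element of the left ideal U(n̄)n̄⁺, plus an element of the left ideal U(n̄)·x_{α₂}(−1) (the left ideal generated by x_{α₂}(−1)). -/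
/-
The argument works for any `x, y ∈ 𝔫` in place of `x_{α₁}, x_{α₂}`; put
`I = U(n̄)n̄⁺ + U(n̄)y(−1)`. Starting from `y(a)`, apply `k` times the operation
`B(a) ↦ x(n) B(a) − x(n+1) B(a−1)`. Since `[y(a), x(n)] = [y, x](a+n)` depends only on `a + n`,
the result does not change if the `x` factors are multiplied on the right instead. Multiplied on
the left, every term ends in some `y(b)` with `b ≥ a − k`, so the element lies in `I` once
`a ≥ k − 1`. Multiplied on the right, it is `y(a) x(n₁)⋯x(n_k)` minus monomials
`y(a') x(n'₁)⋯x(n'_k)` of the same weight with `a' < a` and `n'ᵢ ∈ {nᵢ, nᵢ + 1}`; those with some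
`n'ᵢ = 0` lie in `U(n̄)n̄⁺`. Induction on `a` thus brings a single `y` mode below `r₁ − 1`, and
since the `y` modes commute, they are brought down one at a time.
-/

open scoped TensorProduct

attribute [local instance 100] LieRing.ofAssociativeRing

noncomputable section

/-- 3×3 complex matrices 𝔤𝔩(3,ℂ), with the commutator Lie bracket. -/
abbrev Mat3 : Type := Matrix (Fin 3) (Fin 3) ℂ

lemma upperTri_mul {a b : Mat3} (ha : ∀ i j : Fin 3, j ≤ i → a i j = 0)
    (hb : ∀ i j : Fin 3, j ≤ i → b i j = 0) :
    ∀ i j : Fin 3, j ≤ i → (a * b) i j = 0 := by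
  intro i j hij
  rw [Matrix.mul_apply]
  refine Finset.sum_eq_zero fun k _ => ?_
  by_cases hk : k ≤ i
  · rw [ha i k hk, zero_mul]
  · rw [hb k j (hij.trans (not_le.mp hk).le), mul_zero]

/-- The Lie algebra 𝔫 of strictly upper triangular 3×3 complex matrices. -/
def strictUpper : LieSubalgebra ℂ Mat3 where
  carrier := {M : Mat3 | ∀ i j : Fin 3, j ≤ i → M i j = 0}
  add_mem' := fun {a b} ha hb i j hij => by
    simp only [Matrix.add_apply, ha i j hij, hb i j hij, add_zero]
  zero_mem' := fun i j _ => rfl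
  smul_mem' := fun c a ha i j hij => by
    simp only [Matrix.smul_apply, ha i j hij, smul_zero]
  lie_mem' := fun {a b} ha hb i j hij => by
    rw [Ring.lie_def, Matrix.sub_apply, upperTri_mul ha hb i j hij,
      upperTri_mul hb ha i j hij, sub_zero]

/-- x_{α₁} = E₁₂ ∈ 𝔫. -/
def xa1 : strictUpper :=
  ⟨Matrix.single 0 1 1, by
    intro i j hij
    fin_cases i <;> fin_cases j <;> simp_all [Matrix.single, Matrix.of_apply]⟩

/-- x_{α₂} = E₂₃ ∈ 𝔫. -/
def xa2 : strictUpper :=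
  ⟨Matrix.single 1 2 1, by
    intro i j hij
    fin_cases i <;> fin_cases j <;> simp_all [Matrix.single, Matrix.of_apply]⟩

/-- x_{α₁+α₂} = E₁₃ ∈ 𝔫. -/
def xa12 : strictUpper :=
  ⟨Matrix.single 0 2 1, by
    intro i j hij
    fin_cases i <;> fin_cases j <;> simp_all [Matrix.single, Matrix.of_apply]⟩

/-- The loop algebra n̄ = ℂ[t,t⁻¹] ⊗_ℂ 𝔫, with bracket
`[tᵐ ⊗ x, tⁿ ⊗ y] = t^{m+n} ⊗ [x,y]`. -/
abbrev loopN : Type := LaurentPolynomial ℂ ⊗[ℂ] strictUpper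

/-- n̄ is a Lie algebra over ℂ (by restriction of scalars from ℂ[t,t⁻¹]). -/
instance : LieAlgebra ℂ loopN where
  lie_smul c x y := by
    rw [← algebraMap_smul (LaurentPolynomial ℂ) c y,
      ← algebraMap_smul (LaurentPolynomial ℂ) c ⁅x, y⁆]
    exact lie_smul ((algebraMap ℂ (LaurentPolynomial ℂ)) c) x y

/-- The universal enveloping algebra U(n̄) over ℂ. -/
abbrev Uenv : Type := UniversalEnvelopingAlgebra ℂ loopN

/-- x(m) = tᵐ ⊗ x, viewed as an element of U(n̄). -/
def XX (x : strictUpper) (m : ℤ) : Uenv :=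
  UniversalEnvelopingAlgebra.ι ℂ (LaurentPolynomial.T m ⊗ₜ[ℂ] x)

/-- The ordered monomial x(m₁)⋯x(m_r) ∈ U(n̄) attached to a single root vector
`a` and a sequence of integers `m`. -/
def monom {r : ℕ} (a : strictUpper) (m : Fin r → ℤ) : Uenv :=
  (List.ofFn fun i => XX a (m i)).prod

/-- The left ideal U(n̄)n̄⁺ of U(n̄), generated by the x(m) with x ∈ 𝔫, m ≥ 0. -/
def UNplus : Ideal Uenv :=
  Ideal.span {u : Uenv | ∃ (x : strictUpper) (m : ℤ), 0 ≤ m ∧ u = XX x m}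

/-- The truncated relation R^{[j]}_{t;m} = Σ_{m₁,m₂ ≤ m, m₁+m₂=t} x_{α_j}(m₁)x_{α_j}(m₂)
(here `a` stands for the root vector x_{α_j}). -/
def Rtrunc (a : strictUpper) (t m : ℤ) : Uenv :=
  ∑ k ∈ Finset.Icc (t - m) m, XX a k * XX a (t - k)

/-- The two-sided ideal 𝒥 of U(n̄) generated by all R^{[j]}_{t;m}, j ∈ {1,2}. -/
def Jideal : TwoSidedIdeal Uenv :=
  TwoSidedIdeal.span {u : Uenv | ∃ t m : ℤ, u = Rtrunc xa1 t m ∨ u = Rtrunc xa2 t m}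

/-- The difference two condition on a sequence m₁, …, m_r. -/
def diffTwo {r : ℕ} (m : Fin r → ℤ) : Prop :=
  ∀ i j : Fin r, (i : ℕ) + 1 = (j : ℕ) → m i + 2 ≤ m j

section SpanMul

variable {R A : Type*} [CommSemiring R] [Semiring A] [Algebra R A]

lemma Submodule.mul_mem_of_mem_span_right {S : Set A} {K : Submodule R A} {u v : A}
    (hu : u ∈ Submodule.span R S) (h : ∀ s ∈ S, v * s ∈ K) : v * u ∈ K :=
  (Submodule.span_le (p := K.comap (LinearMap.mulLeft R v))).mpr h hu

lemma Submodule.mul_mem_of_mem_span_left {S : Set A} {K : Submodule R A} {u v : A}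
    (hu : u ∈ Submodule.span R S) (h : ∀ s ∈ S, s * v ∈ K) : u * v ∈ K :=
  (Submodule.span_le (p := K.comap (LinearMap.mulRight R v))).mpr h hu

end SpanMul

lemma List.exists_monotone_ofFn_perm {α : Type*} [LinearOrder α] (l : List α) :
    ∃ m : Fin l.length → α, Monotone m ∧ (List.ofFn m).Perm l :=
  ⟨l.get ∘ Tuple.sort l.get, Tuple.monotone_sort l.get,
    ((Tuple.sort l.get).ofFn_comp_perm l.get).trans (by rw [List.ofFn_get])⟩

lemma XX_zero (m : ℤ) : XX 0 m = 0 := by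
  rw [XX, TensorProduct.tmul_zero, map_zero]

lemma XX_mul_XX_sub_XX_mul_XX (x y : strictUpper) (m n : ℤ) :
    XX x m * XX y n - XX y n * XX x m = XX ⁅x, y⁆ (m + n) := by
  have h := LieHom.map_lie (UniversalEnvelopingAlgebra.ι ℂ (L := loopN))
    (LaurentPolynomial.T m ⊗ₜ[ℂ] x) (LaurentPolynomial.T n ⊗ₜ[ℂ] y)
  rw [LieAlgebra.ExtendScalars.bracket_tmul, ← LaurentPolynomial.T_add, Ring.lie_def] at h
  exact h.symm

lemma commute_XX_XX (x : strictUpper) (m n : ℤ) : Commute (XX x m) (XX x n) :=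
  sub_eq_zero.mp <| by rw [XX_mul_XX_sub_XX_mul_XX, lie_self, XX_zero]

section Modes

variable {x : strictUpper}

def modeProd (x : strictUpper) (l : List ℤ) : Uenv := (l.map (XX x)).prod

@[simp]
lemma modeProd_nil : modeProd x [] = 1 := rfl

@[simp]
lemma modeProd_cons (n : ℤ) (l : List ℤ) : modeProd x (n :: l) = XX x n * modeProd x l :=
  List.prod_cons

@[simp]
lemma modeProd_append (l l' : List ℤ) : modeProd x (l ++ l') = modeProd x l * modeProd x l' := by
  simp [modeProd]

lemma modeProd_perm {l l' : List ℤ} (h : l.Perm l') : modeProd x l = modeProd x l' :=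
  (h.map (XX x)).prod_eq' <| List.pairwise_map.mpr <|
    List.pairwise_of_forall fun a b => commute_XX_XX x a b

lemma commute_XX_modeProd (n : ℤ) (l : List ℤ) : Commute (XX x n) (modeProd x l) :=
  Commute.list_prod_right _ _ fun _ hb => by
    obtain ⟨b, -, rfl⟩ := List.mem_map.mp hb
    exact commute_XX_XX x n b

lemma monom_eq_modeProd {r : ℕ} (m : Fin r → ℤ) : monom x m = modeProd x (List.ofFn m) := by
  rw [monom, modeProd, List.map_ofFn]
  rfl

lemma mul_modeProd_mem_UNplus (u : Uenv) {l : List ℤ} (hl : 0 ∈ l) :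
    u * modeProd x l ∈ UNplus := by
  rw [modeProd_perm (List.perm_cons_erase hl), modeProd_cons, (commute_XX_modeProd 0 _).eq,
    ← mul_assoc]
  exact UNplus.mul_mem_left _ (Ideal.subset_span ⟨x, 0, le_rfl, rfl⟩)

end Modes

def relIdeal (y : strictUpper) : Ideal Uenv := UNplus ⊔ Ideal.span {XX y (-1)}

lemma XX_mem_relIdeal (y : strictUpper) {a : ℤ} (ha : -1 ≤ a) : XX y a ∈ relIdeal y := by
  rcases ha.lt_or_eq with ha | rfl
  · exact Ideal.mem_sup_left (Ideal.subset_span ⟨y, a, by omega, rfl⟩)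
  · exact Ideal.mem_sup_right (Ideal.mem_span_singleton_self _)

section Sweep

variable (x y : strictUpper)

/-- `sweepLeft x y a [n₁, …, n_k] = ∑_S (−1)^|S| (∏ᵢ x(nᵢ + [i ∈ S])) y(a − |S|)`,
summed over `S ⊆ {1, …, k}`. -/
def sweepLeft : ℤ → List ℤ → Uenv
  | a, [] => XX y a
  | a, n :: l => XX x n * sweepLeft a l - XX x (n + 1) * sweepLeft (a - 1) l

def sweepRight : ℤ → List ℤ → Uenv
  | a, [] => XX y a
  | a, n :: l => sweepRight a l * XX x n - sweepRight (a - 1) l * XX x (n + 1)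

variable {x y}

lemma sweepLeft_mem_relIdeal : ∀ (l : List ℤ) {a : ℤ}, (l.length : ℤ) ≤ a + 1 →
    sweepLeft x y a l ∈ relIdeal y
  | [], _, ha => XX_mem_relIdeal y (by simp at ha; omega)
  | n :: l, a, ha => by
    simp only [List.length_cons, Nat.cast_succ] at ha
    exact sub_mem (Ideal.mul_mem_left _ _ (sweepLeft_mem_relIdeal l (by omega)))
      (Ideal.mul_mem_left _ _ (sweepLeft_mem_relIdeal l (by omega)))

lemma sweepLeft_mul_XX_sub : ∀ (l : List ℤ) (a n : ℤ),
    sweepLeft x y a l * XX x n - XX x n * sweepLeft x y a l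
      = sweepLeft x y (a - 1) l * XX x (n + 1) - XX x (n + 1) * sweepLeft x y (a - 1) l
  | [], a, n => by
    simp only [sweepLeft, XX_mul_XX_sub_XX_mul_XX, sub_add_add_cancel]
  | m :: l, a, n => by
    have expand : ∀ (B C : Uenv) (q : ℤ),
        (XX x m * B - XX x (m + 1) * C) * XX x q - XX x q * (XX x m * B - XX x (m + 1) * C)
          = XX x m * (B * XX x q - XX x q * B) - XX x (m + 1) * (C * XX x q - XX x q * C) := by
      intro B C q
      simp only [mul_sub, sub_mul, mul_assoc, ← mul_assoc (XX x q),
        (commute_XX_XX x q m).eq, (commute_XX_XX x q (m + 1)).eq]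
      abel
    simp only [sweepLeft]
    rw [expand, expand, sweepLeft_mul_XX_sub l a n, sweepLeft_mul_XX_sub l (a - 1) n]

lemma sweepRight_eq_sweepLeft : ∀ (l : List ℤ) (a : ℤ), sweepRight x y a l = sweepLeft x y a l
  | [], _ => rfl
  | n :: l, a => by
    simp only [sweepRight, sweepLeft, sweepRight_eq_sweepLeft l]
    rw [sub_eq_iff_eq_add.mp (sweepLeft_mul_XX_sub l a n)]
    abel

end Sweep

section Reduction

variable {x y : strictUpper}

variable (x y) in
def lowerMonomials (a : ℤ) (k : ℕ) (w : ℤ) : Set Uenv :=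
  {u | ∃ a' l, a' < a ∧ l.length = k ∧ (∀ n ∈ l, n ≤ 0) ∧ a' + l.sum = w ∧
    u = XX y a' * modeProd x l}

lemma mul_XX_mem_lowerMonomials {a b q w w' : ℤ} {k : ℕ} {s : Uenv}
    (hs : s ∈ lowerMonomials x y b k w) (hba : b ≤ a) (hq : q ≤ 0) (hw : w + q = w') :
    s * XX x q ∈ lowerMonomials x y a (k + 1) w' := by
  obtain ⟨a', l, ha', rfl, hl, rfl, rfl⟩ := hs
  refine ⟨a', q :: l, by omega, rfl, ?_, by simp only [List.sum_cons]; omega, ?_⟩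
  · simpa [hq] using hl
  · rw [mul_assoc, modeProd_cons, (commute_XX_modeProd q l).eq]

lemma XX_mul_modeProd_sub_sweepRight_mem_span : ∀ (l : List ℤ), (∀ n ∈ l, n ≤ -1) → ∀ a : ℤ,
    XX y a * modeProd x l - sweepRight x y a l
      ∈ Submodule.span ℂ (lowerMonomials x y a l.length (a + l.sum))
  | [], _, a => by simp [sweepRight]
  | n :: l, hl, a => by
    simp only [List.mem_cons, forall_eq_or_imp] at hl
    have expand : XX y a * modeProd x (n :: l) - sweepRight x y a (n :: l)
        = (XX y a * modeProd x l - sweepRight x y a l) * XX x n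
          - (XX y (a - 1) * modeProd x l - sweepRight x y (a - 1) l) * XX x (n + 1)
          + XX y (a - 1) * modeProd x ((n + 1) :: l) := by
      simp only [modeProd_cons, sweepRight, sub_mul, mul_assoc,
        (commute_XX_modeProd n l).eq, (commute_XX_modeProd (n + 1) l).eq]
      abel
    rw [expand]
    refine add_mem (sub_mem ?_ ?_) (Submodule.subset_span ?_)
    · refine Submodule.mul_mem_of_mem_span_left
        (XX_mul_modeProd_sub_sweepRight_mem_span l hl.2 a) fun s hs => Submodule.subset_span ?_
      exact mul_XX_mem_lowerMonomials hs le_rfl (by omega) (by simp only [List.sum_cons]; ring)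
    · refine Submodule.mul_mem_of_mem_span_left
        (XX_mul_modeProd_sub_sweepRight_mem_span l hl.2 (a - 1))
        fun s hs => Submodule.subset_span ?_
      exact mul_XX_mem_lowerMonomials hs (by omega) (by omega) (by simp only [List.sum_cons]; ring)
    · refine ⟨a - 1, (n + 1) :: l, by omega, rfl, ?_, by simp only [List.sum_cons]; ring, rfl⟩
      simp only [List.mem_cons, forall_eq_or_imp]
      exact ⟨by omega, fun m hm => (hl.2 m hm).trans (by norm_num)⟩

variable (x y) in
def reducedMonomials (r1 k : ℕ) (w : ℤ) : Set Uenv :=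
  {u | ∃ c l : List ℤ, c.length = k ∧ l.length = r1 ∧ (∀ b ∈ c, b ≤ (r1 : ℤ) - 2) ∧
    (∀ n ∈ l, n ≤ -1) ∧ c.sum + l.sum = w ∧ u = modeProd y c * modeProd x l}

variable (x y) in
def reducedSpan (r1 k : ℕ) (w : ℤ) : Submodule ℂ Uenv :=
  Submodule.span ℂ (reducedMonomials x y r1 k w) ⊔ (relIdeal y).restrictScalars ℂ

lemma mul_mem_reducedSpan {r1 k k' : ℕ} {w w' : ℤ} {u v : Uenv}
    (hu : u ∈ reducedSpan x y r1 k w)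
    (h : ∀ s ∈ reducedMonomials x y r1 k w, v * s ∈ reducedSpan x y r1 k' w') :
    v * u ∈ reducedSpan x y r1 k' w' := by
  obtain ⟨s, hs, i, hi, rfl⟩ := Submodule.mem_sup.mp hu
  rw [mul_add]
  exact add_mem (Submodule.mul_mem_of_mem_span_right hs h)
    (Submodule.mem_sup_right (Ideal.mul_mem_left _ v hi))

lemma XX_mul_modeProd_mem_reducedSpan {r1 : ℕ} {l : List ℤ} (hlen : l.length = r1)
    (hl : ∀ n ∈ l, n ≤ -1) (a : ℤ) :
    XX y a * modeProd x l ∈ reducedSpan x y r1 1 (a + l.sum) := by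
  obtain ⟨t, ht⟩ : ∃ t : ℕ, a ≤ (r1 : ℤ) - 2 + t := ⟨(a - r1 + 2).toNat, by omega⟩
  induction t generalizing a l with
  | zero =>
    exact Submodule.mem_sup_left <| Submodule.subset_span
      ⟨[a], l, rfl, hlen, by simpa using ht, hl, by simp, by simp [modeProd]⟩
  | succ t ih =>
    rcases le_or_gt a ((r1 : ℤ) - 2 + t) with hat | hat
    · exact ih hlen hl a hat
    have hlower : Submodule.span ℂ (lowerMonomials x y a r1 (a + l.sum))
        ≤ reducedSpan x y r1 1 (a + l.sum) := by
      refine Submodule.span_le.mpr ?_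
      rintro _ ⟨a', l', ha', hlen', hl', hw, rfl⟩
      by_cases h0 : 0 ∈ l'
      · exact Submodule.mem_sup_right (Ideal.mem_sup_left (mul_modeProd_mem_UNplus _ h0))
      · rw [← hw]
        refine ih hlen' (fun n hn => ?_) a' (by omega)
        have hne : n ≠ 0 := by rintro rfl; exact h0 hn
        have := hl' n hn
        omega
    have hsweep : sweepRight x y a l ∈ relIdeal y :=
      sweepRight_eq_sweepLeft l a ▸ sweepLeft_mem_relIdeal l (by omega)
    rw [← sub_add_cancel (XX y a * modeProd x l) (sweepRight x y a l)]
    exact add_mem (hlower (hlen ▸ XX_mul_modeProd_sub_sweepRight_mem_span l hl a))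
      (Submodule.mem_sup_right hsweep)

lemma modeProd_mul_modeProd_mem_reducedSpan {r1 : ℕ} {l : List ℤ} (hlen : l.length = r1)
    (hl : ∀ n ∈ l, n ≤ -1) :
    ∀ c : List ℤ, modeProd y c * modeProd x l ∈ reducedSpan x y r1 c.length (c.sum + l.sum)
  | [] => Submodule.mem_sup_left <| Submodule.subset_span
      ⟨[], l, rfl, hlen, by simp, hl, rfl, rfl⟩
  | a :: c => by
    rw [modeProd_cons, mul_assoc]
    refine mul_mem_reducedSpan (modeProd_mul_modeProd_mem_reducedSpan hlen hl c) ?_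
    rintro _ ⟨c', l', hc', hl', hc'b, hl'b, hw, rfl⟩
    rw [← mul_assoc, (commute_XX_modeProd a c').eq, mul_assoc]
    refine mul_mem_reducedSpan (XX_mul_modeProd_mem_reducedSpan hl' hl'b a) ?_
    rintro _ ⟨c'', l'', hc'', hl'', hc''b, hl''b, hw', rfl⟩
    rw [← mul_assoc, ← modeProd_append]
    refine Submodule.mem_sup_left (Submodule.subset_span
      ⟨c' ++ c'', l'', by simp [hc', hc''], hl'', ?_, hl''b, ?_, rfl⟩)
    · simpa [or_imp, forall_and] using ⟨hc'b, hc''b⟩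
    · simp only [List.sum_append, List.sum_cons]
      omega

end Reduction

lemma reducedMonomials_subset_sorted (x y : strictUpper) (r1 r2 : ℕ) (w : ℤ) :
    reducedMonomials x y r1 r2 w ⊆ {u : Uenv |
      ∃ (m2' : Fin r2 → ℤ) (m1' : Fin r1 → ℤ),
        Monotone m2' ∧ Monotone m1' ∧
        (∀ i, m2' i ≤ (r1 : ℤ) - 2) ∧ (∀ i, m1' i ≤ -1) ∧
        ((∑ i, m2' i) + ∑ i, m1' i = w) ∧
        u = monom y m2' * monom x m1'} := by
  rintro _ ⟨c, l, rfl, rfl, hc, hl, hw, rfl⟩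
  obtain ⟨m2', hm2', hc'⟩ := c.exists_monotone_ofFn_perm
  obtain ⟨m1', hm1', hl'⟩ := l.exists_monotone_ofFn_perm
  refine ⟨m2', m1', hm2', hm1', fun i => hc _ (hc'.subset (List.mem_ofFn.mpr ⟨i, rfl⟩)),
    fun i => hl _ (hl'.subset (List.mem_ofFn.mpr ⟨i, rfl⟩)), ?_, ?_⟩
  · rw [← List.sum_ofFn, ← List.sum_ofFn, hc'.sum_eq, hl'.sum_eq, hw]
  · rw [monom_eq_modeProd, monom_eq_modeProd, modeProd_perm hc', modeProd_perm hl']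

/-- Lemma 3.5(2) of the paper: for `r₁, r₂ ≥ 1`, `m_{1,2} ≤ ⋯ ≤ m_{r₂,2}` with
`m_{r₂,2} ≥ r₁ − 1` and `m_{1,1} ≤ ⋯ ≤ m_{r₁,1} ≤ −1`, the monomial
`x_{α₂}(m_{1,2})⋯x_{α₂}(m_{r₂,2})x_{α₁}(m_{1,1})⋯x_{α₁}(m_{r₁,1})` is a ℂ-linear
combination of such monomials with `m'_{r₂,2} ≤ r₁ − 2`, `m'_{r₁,1} ≤ −1` and the
same total index sum, plus an element of U(n̄)n̄⁺, plus an element of the left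
ideal U(n̄)·x_{α₂}(−1). -/
theorem statement5 (r1 r2 : ℕ)
    (m2 : Fin r2 → ℤ) (m1 : Fin r1 → ℤ)
    (hm1neg : ∀ i, m1 i ≤ -1) :
    ∃ v ∈ Submodule.span ℂ {u : Uenv |
        ∃ (m2' : Fin r2 → ℤ) (m1' : Fin r1 → ℤ),
          Monotone m2' ∧ Monotone m1' ∧
          (∀ i, m2' i ≤ (r1 : ℤ) - 2) ∧ (∀ i, m1' i ≤ -1) ∧
          ((∑ i, m2' i) + ∑ i, m1' i = (∑ i, m2 i) + ∑ i, m1 i) ∧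
          u = monom xa2 m2' * monom xa1 m1'},
      ∃ w ∈ UNplus, ∃ z ∈ Ideal.span {XX xa2 (-1)},
        monom xa2 m2 * monom xa1 m1 = v + w + z := by
  have hmem := modeProd_mul_modeProd_mem_reducedSpan (x := xa1) (y := xa2)
    (List.length_ofFn (f := m1)) (by simpa [List.mem_ofFn] using hm1neg) (List.ofFn m2)
  rw [List.length_ofFn, List.sum_ofFn, List.sum_ofFn] at hmem
  obtain ⟨v, hv, q, hq, hvq⟩ := Submodule.mem_sup.mp hmem
  obtain ⟨w, hw, z, hz, rfl⟩ := Submodule.mem_sup.mp hq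
  refine ⟨v, Submodule.span_mono (reducedMonomials_subset_sorted xa1 xa2 r1 r2 _) hv,
    w, hw, z, hz, ?_⟩
  rw [monom_eq_modeProd, monom_eq_modeProd, ← hvq, add_assoc]

end
end

section
/- Let s, r, p ≥ 0 with s + r + p ≥ 1, and let n₁ ≤ ⋯ ≤ n_s, m₁ ≤ ⋯ ≤ m_r ≤ −1 and l₁ ≤ ⋯ ≤ l_p ≤ −1 be integers. Then the monomial x_{α₂}(n₁)⋯x_{α₂}(n_s)·x_{α₁}(m₁)⋯x_{α₁}(m_r)·x_{α₁+α₂}(l₁)⋯x_{α₁+α₂}(l_p) of U(n̄) is a ℂ-linear combination of monomials of the form x_{α₂}(m_{1,2})⋯x_{α₂}(m_{r₂,2})·x_{α₁}(m_{1,1})⋯x_{α₁}(m_{r₁,1}) with m_{1,2} ≤ ⋯ ≤ m_{r₂,2}, m_{1,1} ≤ ⋯ ≤ m_{r₁,1} ≤ −1 and total index sum equal to n₁ + ⋯ + n_s + m₁ + ⋯ + m_r + l₁ + ⋯ + l_p, plus an element of the left ideal U(n̄)n̄⁺. (That is, the factors x_{α₁+α₂}(·) can be eliminated.) -/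
open scoped TensorProduct

attribute [local instance] LieRing.ofAssociativeRing

noncomputable section

/-!
Since `x_{α₁+α₂}` is central in `𝔫`, every `x_{α₁+α₂}(c)` is central in `U(n̄)`, so the
`x_{α₁+α₂}(c)` with `c ≥ 0` generate a two-sided ideal contained in `U(n̄)n̄⁺`. Pick `b ≥ 0` with
`m_i + b ≥ 0` for all `i` and write the first factor `x_{α₁+α₂}(l₁)` as the commutator
`[x_{α₁}(l₁ - b), x_{α₂}(b)]`. Moving `x_{α₂}(b)` to the far right gives an element of `U(n̄)n̄⁺`;
moving it left past `x_{α₁}(m₁)⋯x_{α₁}(m_r)` produces commutators `x_{α₁+α₂}(m_i + b)`, which lie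
in that two-sided ideal, and leaves a monomial of the same shape and total index with one factor
`x_{α₁+α₂}` fewer, as `l₁ - b ≤ -1`. Induction on `p` ends with a monomial in `x_{α₂}`, `x_{α₁}`
only, whose commuting factors can be sorted.
-/

theorem Ideal.isTwoSided_span_of_commute {R : Type*} [Semiring R] {S : Set R}
    (hS : ∀ s ∈ S, ∀ r : R, Commute s r) : (Ideal.span S).IsTwoSided := by
  refine ⟨fun {a} b ha => ?_⟩
  induction ha using Submodule.span_induction with
  | mem s hs => rw [(hS s hs b).eq]; exact Ideal.mul_mem_left _ _ (Ideal.subset_span hs)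
  | zero => rw [zero_mul]; exact zero_mem _
  | add x y _ _ hx hy => rw [add_mul]; exact add_mem hx hy
  | smul r x _ hx => rw [smul_eq_mul, mul_assoc]; exact Ideal.mul_mem_left _ _ hx

theorem Ideal.list_prod_mul_sub_mul_list_prod_mem {R : Type*} [Ring R] (I : Ideal R)
    [I.IsTwoSided] {y : R} :
    ∀ l : List R, (∀ x ∈ l, x * y - y * x ∈ I) → l.prod * y - y * l.prod ∈ I
  | [], _ => by simp
  | x :: l, h => by
    have hx := h x List.mem_cons_self
    have hl := list_prod_mul_sub_mul_list_prod_mem I l fun z hz => h z (List.mem_cons_of_mem x hz)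
    have key : (x * l.prod) * y - y * (x * l.prod)
        = x * (l.prod * y - y * l.prod) + (x * y - y * x) * l.prod := by noncomm_ring
    rw [List.prod_cons, key]
    exact add_mem (I.mul_mem_left x hl) (I.mul_mem_right _ hx)

theorem UniversalEnvelopingAlgebra.commute_ι_of_forall_lie_eq_zero {R L : Type*} [CommRing R]
    [LieRing L] [LieAlgebra R L] {x : L} (hx : ∀ y : L, ⁅x, y⁆ = 0)
    (u : UniversalEnvelopingAlgebra R L) : Commute (ι R x) u := by
  obtain ⟨t, rfl⟩ : ∃ t, mkAlgHom R L t = u := RingCon.mkₐ_surjective _ u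
  induction t using TensorAlgebra.induction with
  | algebraMap c =>
    rw [AlgHom.commutes]
    exact Algebra.commute_algebraMap_right c _
  | ι y =>
    have h := (ι R (L := L)).map_lie x y
    rw [hx y, map_zero, Ring.lie_def, eq_comm, sub_eq_zero] at h
    exact h
  | mul a b ha hb => rw [map_mul]; exact ha.mul_right hb
  | add a b ha hb => rw [map_add]; exact ha.add_right hb

open LaurentPolynomial UniversalEnvelopingAlgebra

lemma lie_xa1_xa2 : ⁅xa1, xa2⁆ = xa12 := by
  ext i j
  simp only [LieSubalgebra.coe_bracket, Ring.lie_def, xa1, xa2, xa12]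
  fin_cases i <;> fin_cases j <;> simp [Matrix.sub_apply]

lemma lie_xa12_eq_zero (y : strictUpper) : ⁅xa12, y⁆ = 0 := by
  obtain ⟨y, hy⟩ := y
  have h : ∀ i j : Fin 3, j ≤ i → y i j = 0 := hy
  ext i j
  simp only [LieSubalgebra.coe_bracket, Ring.lie_def, xa12, ZeroMemClass.coe_zero]
  fin_cases i <;> fin_cases j <;>
    simp (disch := decide) [Matrix.sub_apply, Matrix.mul_apply, Matrix.single_apply, h]

lemma XX_mul_sub_mul (x y : strictUpper) (j k : ℤ) :
    XX x j * XX y k - XX y k * XX x j = ι ℂ ((T (j + k) : LaurentPolynomial ℂ) ⊗ₜ[ℂ] ⁅x, y⁆) := by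
  rw [XX, XX, ← Ring.lie_def, ← LieHom.map_lie, LieAlgebra.ExtendScalars.bracket_tmul, T_add]

lemma commute_XX_of_lie_eq_zero {x y : strictUpper} (h : ⁅x, y⁆ = 0) (j k : ℤ) :
    Commute (XX x j) (XX y k) :=
  sub_eq_zero.mp (by rw [XX_mul_sub_mul, h, TensorProduct.tmul_zero, map_zero])

lemma XX_xa12_add (j k : ℤ) : XX xa12 (j + k) = XX xa1 j * XX xa2 k - XX xa2 k * XX xa1 j := by
  rw [XX_mul_sub_mul, lie_xa1_xa2, XX]

lemma commute_XX_xa12 (c : ℤ) (u : Uenv) : Commute (XX xa12 c) u := by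
  refine commute_ι_of_forall_lie_eq_zero (fun z => ?_) u
  induction z using TensorProduct.induction_on with
  | zero => exact lie_zero _
  | tmul f y =>
    rw [LieAlgebra.ExtendScalars.bracket_tmul, lie_xa12_eq_zero, TensorProduct.tmul_zero]
  | add z w hz hw => rw [lie_add, hz, hw, add_zero]

lemma monom_succ {r : ℕ} (a : strictUpper) (m : Fin (r + 1) → ℤ) :
    monom a m = XX a (m 0) * monom a (Fin.tail m) := by
  rw [monom, List.ofFn_succ, List.prod_cons]
  rfl

lemma monom_snoc {r : ℕ} (a : strictUpper) (m : Fin r → ℤ) (x : ℤ) :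
    monom a (Fin.snoc m x) = monom a m * XX a x := by
  simp only [monom, List.ofFn_succ', Fin.snoc_castSucc, Fin.snoc_last, List.concat_eq_append,
    List.prod_append, List.prod_singleton]

lemma monom_comp_perm {a : strictUpper} (ha : ∀ j k : ℤ, Commute (XX a j) (XX a k))
    {r : ℕ} (m : Fin r → ℤ) (σ : Equiv.Perm (Fin r)) : monom a (m ∘ σ) = monom a m :=
  (σ.ofFn_comp_perm fun i => XX a (m i)).prod_eq' <|
    List.pairwise_ofFn.mpr fun _ _ _ => ha _ _

def straightMonomials (σ : ℤ) : Set Uenv :=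
  {u : Uenv | ∃ (r2 r1 : ℕ) (m2 : Fin r2 → ℤ) (m1 : Fin r1 → ℤ),
    Monotone m2 ∧ Monotone m1 ∧ (∀ i, m1 i ≤ -1) ∧ ((∑ i, m2 i) + ∑ i, m1 i = σ) ∧
      u = monom xa2 m2 * monom xa1 m1}

lemma monom_mul_monom_mem_straightMonomials {s r : ℕ} (n : Fin s → ℤ) (m : Fin r → ℤ)
    (hm : ∀ i, m i ≤ -1) : monom xa2 n * monom xa1 m ∈
      straightMonomials ((∑ i, n i) + ∑ i, m i) := by
  refine ⟨s, r, n ∘ Tuple.sort n, m ∘ Tuple.sort m, Tuple.monotone_sort n,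
    Tuple.monotone_sort m, fun i => hm _, ?_, ?_⟩
  · rw [Function.comp_def, Function.comp_def, Equiv.sum_comp, Equiv.sum_comp]
  · rw [monom_comp_perm (commute_XX_of_lie_eq_zero (lie_self xa2)),
      monom_comp_perm (commute_XX_of_lie_eq_zero (lie_self xa1))]

def positiveCentralIdeal : Ideal Uenv :=
  Ideal.span {u : Uenv | ∃ c : ℤ, 0 ≤ c ∧ u = XX xa12 c}

instance : positiveCentralIdeal.IsTwoSided :=
  Ideal.isTwoSided_span_of_commute fun _ ⟨c, _, hu⟩ => hu ▸ commute_XX_xa12 c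

lemma positiveCentralIdeal_le_UNplus : positiveCentralIdeal ≤ UNplus :=
  Ideal.span_mono fun _ ⟨c, hc, hu⟩ => ⟨xa12, c, hc, hu⟩

lemma monom_xa1_mul_sub_mul_mem {r : ℕ} (m : Fin r → ℤ) {b : ℤ} (hb : ∀ i, 0 ≤ m i + b) :
    monom xa1 m * XX xa2 b - XX xa2 b * monom xa1 m ∈ positiveCentralIdeal := by
  refine Ideal.list_prod_mul_sub_mul_list_prod_mem _ _ fun x hx => ?_
  obtain ⟨i, rfl⟩ := List.mem_ofFn.mp hx
  rw [← XX_xa12_add]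
  exact Ideal.subset_span ⟨_, hb i, rfl⟩

lemma commute_monom_xa12 {p : ℕ} (l : Fin p → ℤ) (u : Uenv) : Commute (monom xa12 l) u :=
  Commute.list_prod_left _ _ fun _ hx => by
    obtain ⟨i, rfl⟩ := List.mem_ofFn.mp hx
    exact commute_XX_xa12 _ u

lemma exists_nonneg_forall_add_nonneg {r : ℕ} (m : Fin r → ℤ) :
    ∃ b : ℤ, 0 ≤ b ∧ ∀ i, 0 ≤ m i + b :=
  ⟨∑ i, |m i|, Finset.sum_nonneg fun i _ => abs_nonneg (m i), fun i => by
    linarith [neg_abs_le (m i),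
      Finset.single_le_sum (fun j _ => abs_nonneg (m j)) (Finset.mem_univ i)]⟩

lemma monom_mul_monom_mul_monom_xa12_mem {p : ℕ} (l : Fin p → ℤ) (hl : ∀ i, l i ≤ -1)
    {s r : ℕ} (n : Fin s → ℤ) (m : Fin r → ℤ) (hm : ∀ i, m i ≤ -1) :
    monom xa2 n * monom xa1 m * monom xa12 l ∈
      Submodule.span ℂ (straightMonomials ((∑ i, n i) + (∑ i, m i) + ∑ i, l i)) ⊔
        UNplus.restrictScalars ℂ := by
  induction p generalizing s r with
  | zero =>
    rw [show monom xa12 l = 1 from rfl, mul_one, Fin.sum_univ_zero, add_zero]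
    exact Submodule.mem_sup_left (Submodule.subset_span
      (monom_mul_monom_mem_straightMonomials n m hm))
  | succ p ih =>
    obtain ⟨b, hb, hmb⟩ := exists_nonneg_forall_add_nonneg m
    set a := l 0 - b
    set L := monom xa12 (Fin.tail l)
    have hbL : XX xa2 b * L = L * XX xa2 b := (commute_monom_xa12 _ _).eq.symm
    have split : monom xa2 n * monom xa1 m * monom xa12 l
        = monom xa2 n * monom xa1 m * XX xa1 a * L * XX xa2 b
          - monom xa2 (Fin.snoc n b) * monom xa1 (Fin.snoc m a) * L
          - monom xa2 n * (monom xa1 m * XX xa2 b - XX xa2 b * monom xa1 m)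
              * (XX xa1 a * L) := by
      rw [monom_succ, show l 0 = a + b by omega, XX_xa12_add, monom_snoc, monom_snoc,
        mul_assoc (monom xa2 n * monom xa1 m * XX xa1 a) L, ← hbL]
      noncomm_ring
    have hsnoc : ∀ i, (Fin.snoc m a : Fin (r + 1) → ℤ) i ≤ -1 := by
      intro i
      cases i using Fin.lastCases with
      | last => rw [Fin.snoc_last]; linarith [hl 0]
      | cast j => rw [Fin.snoc_castSucc]; exact hm j
    have hsum : (∑ i, (Fin.snoc n b : Fin (s + 1) → ℤ) i)
        + (∑ i, (Fin.snoc m a : Fin (r + 1) → ℤ) i) + ∑ i, Fin.tail l i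
          = (∑ i, n i) + (∑ i, m i) + ∑ i, l i := by
      simp only [Fin.sum_univ_castSucc, Fin.snoc_castSucc, Fin.snoc_last, Fin.sum_univ_succ l,
        Fin.tail]
      ring
    rw [split]
    refine sub_mem (sub_mem ?_ ?_) ?_
    · exact Submodule.mem_sup_right
        (Ideal.mul_mem_left _ _ (Ideal.subset_span ⟨xa2, b, hb, rfl⟩))
    · simpa only [hsum] using ih (Fin.tail l) (fun i => hl _) (Fin.snoc n b) (Fin.snoc m a) hsnoc
    · exact Submodule.mem_sup_right (positiveCentralIdeal_le_UNplus
        (Ideal.mul_mem_right _ _ (Ideal.mul_mem_left _ _ (monom_xa1_mul_sub_mul_mem m hmb))))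

theorem statement11_general (s r p : ℕ)
    (nseq : Fin s → ℤ) (m : Fin r → ℤ) (lseq : Fin p → ℤ)
    (hmneg : ∀ i, m i ≤ -1) (hlneg : ∀ i, lseq i ≤ -1) :
    ∃ v ∈ Submodule.span ℂ {u : Uenv |
        ∃ (r2 r1 : ℕ) (m2 : Fin r2 → ℤ) (m1 : Fin r1 → ℤ),
          Monotone m2 ∧ Monotone m1 ∧ (∀ i, m1 i ≤ -1) ∧
          ((∑ i, m2 i) + ∑ i, m1 i = (∑ i, nseq i) + (∑ i, m i) + ∑ i, lseq i) ∧
          u = monom xa2 m2 * monom xa1 m1},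
      ∃ w ∈ UNplus,
        monom xa2 nseq * monom xa1 m * monom xa12 lseq = v + w := by
  obtain ⟨v, hv, w, hw, hvw⟩ :=
    Submodule.mem_sup.mp (monom_mul_monom_mul_monom_xa12_mem lseq hlneg nseq m hmneg)
  exact ⟨v, hv, w, hw, hvw.symm⟩

/-- Remark 3.3 of the paper (elimination of the x_{α₁+α₂} factors): a monomial
`x_{α₂}(n₁)⋯x_{α₂}(n_s)x_{α₁}(m₁)⋯x_{α₁}(m_r)x_{α₁+α₂}(l₁)⋯x_{α₁+α₂}(l_p)`
with `n₁ ≤ ⋯ ≤ n_s`, `m₁ ≤ ⋯ ≤ m_r ≤ −1`, `l₁ ≤ ⋯ ≤ l_p ≤ −1` is a ℂ-linear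
combination of monomials `x_{α₂}(m_{1,2})⋯x_{α₂}(m_{r₂,2})x_{α₁}(m_{1,1})⋯x_{α₁}(m_{r₁,1})`
with `m_{1,2} ≤ ⋯ ≤ m_{r₂,2}`, `m_{1,1} ≤ ⋯ ≤ m_{r₁,1} ≤ −1` and the same total
index sum, plus an element of U(n̄)n̄⁺. -/
theorem statement11 (s r p : ℕ) (hsrp : 1 ≤ s + r + p)
    (nseq : Fin s → ℤ) (m : Fin r → ℤ) (lseq : Fin p → ℤ)
    (hn : Monotone nseq) (hm : Monotone m) (hl : Monotone lseq)
    (hmneg : ∀ i, m i ≤ -1) (hlneg : ∀ i, lseq i ≤ -1) :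
    ∃ v ∈ Submodule.span ℂ {u : Uenv |
        ∃ (r2 r1 : ℕ) (m2 : Fin r2 → ℤ) (m1 : Fin r1 → ℤ),
          Monotone m2 ∧ Monotone m1 ∧ (∀ i, m1 i ≤ -1) ∧
          ((∑ i, m2 i) + ∑ i, m1 i = (∑ i, nseq i) + (∑ i, m i) + ∑ i, lseq i) ∧
          u = monom xa2 m2 * monom xa1 m1},
      ∃ w ∈ UNplus,
        monom xa2 nseq * monom xa1 m * monom xa12 lseq = v + w :=
  statement11_general s r p nseq m lseq hmneg hlneg

end
end
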